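/- (Combinatorial Beurling criterion.) Let S be a finite cover of a set X, Γ a nonempty curve family, p > 1, and let ρ be an admissible metric normalized so that L_ρ(Γ,S) = 1. Then ρ is optimal, i.e. mod_p(Γ,ρ,S) = mod_p(Γ,S), if and only if there exist a nonempty finite subfamily Γ₀ ⊆ Γ and nonnegative scalars (λ_γ)_{γ∈Γ₀} such that: (i) ℓ_ρ(γ) = 1 for every γ ∈ Γ₀, and (ii) for every s ∈ S, p·ρ(s)^{p−1} = Σ_{γ∈Γ₀, s∩γ≠∅} λ_γ. In this case mod_p(Γ,S) = (1/p)·Σ_{γ∈Γ₀} λ_γ. Moreover the optimal metric is unique up to multiplication by a positive scalar. -/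

import Mathlib

open scoped ENNReal
open Set

attribute [local instance] Classical.propDecidable

namespace CombModFin

variable {X : Type*}

/-- The `ρ`-length of a set `K`: the sum of `ρ s` over the elements `s` of the cover `S`
    meeting `K`. -/
noncomputable def len (S : Finset (Set X)) (ρ : Set X → ℝ≥0∞) (K : Set X) : ℝ≥0∞ :=
  ∑ s ∈ S.filter fun s => (s ∩ K).Nonempty, ρ s

/-- `L_ρ(Γ,S)`: the infimum of the `ρ`-lengths of the curves of `Γ`. -/
noncomputable def Lmin (S : Finset (Set X)) (ρ : Set X → ℝ≥0∞) (Γ : Set (Set X)) : ℝ≥0∞ :=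
  ⨅ γ ∈ Γ, len S ρ γ

/-- `V_p(ρ)`: the `p`-volume of the admissible metric `ρ`. -/
noncomputable def vol (S : Finset (Set X)) (ρ : Set X → ℝ≥0∞) (p : ℝ) : ℝ≥0∞ :=
  ∑ s ∈ S, ρ s ^ p

/-- An admissible metric: a function `ρ : S → [0,∞)` which is not identically zero on `S`. -/
def Admissible (S : Finset (Set X)) (ρ : Set X → ℝ≥0∞) : Prop :=
  (∀ s ∈ S, ρ s ≠ ∞) ∧ ∃ s ∈ S, ρ s ≠ 0

/-- `mod_p(Γ,ρ,S) = V_p(ρ) / L_ρ(Γ,S)^p`. -/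
noncomputable def modWith (S : Finset (Set X)) (Γ : Set (Set X)) (ρ : Set X → ℝ≥0∞)
    (p : ℝ) : ℝ≥0∞ :=
  vol S ρ p / Lmin S ρ Γ ^ p

/-- The combinatorial `p`-modulus: the infimum of `mod_p(Γ,ρ,S)` over admissible metrics `ρ`. -/
noncomputable def cmod (S : Finset (Set X)) (Γ : Set (Set X)) (p : ℝ) : ℝ≥0∞ :=
  ⨅ (ρ : Set X → ℝ≥0∞) (_ : Admissible S ρ), modWith S Γ ρ p

end CombModFin

/-!
On metrics of `Γ`-length at least one, optimality of a normalized `ρ` means that `ρ` minimizes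
the `p`-volume `V(ρ) = ∑ ρ(s)^p`, a strictly convex function; this gives uniqueness up to
scaling. The Beurling condition is the Karush–Kuhn–Tucker condition of this convex program.
Sufficiency is Young's inequality `p ρ^{p-1} τ ≤ τ^p + (p-1) ρ^p` summed against the multipliers.
Necessity is Farkas' lemma applied to the first variation of `V` at `ρ` in the directions that do
not shorten the curves of length one. Pairing the condition with `ρ` gives `∑ λ_γ = p V(ρ)`, the
value of the modulus.
-/

open Filter Topology

section Farkas

variable {E : Type*} [NormedAddCommGroup E] [NormedSpace ℝ E] {ι : Type*} [Fintype ι]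

theorem exists_mem_stdSimplex_sum_smul_eq_zero (a : ι → E)
    (h : ∀ f : StrongDual ℝ E, ∃ i, f (a i) ≤ 0) :
    ∃ t ∈ stdSimplex ℝ ι, ∑ i, t i • a i = 0 := by
  let g := Fintype.linearCombination ℝ a
  have hK : IsCompact (g '' stdSimplex ℝ ι) :=
    (isCompact_stdSimplex ℝ ι).image (LinearMap.continuous_of_finiteDimensional g)
  by_contra! h0
  obtain ⟨f, u, hf0, hfK⟩ := geometric_hahn_banach_point_closed
    ((convex_stdSimplex ℝ ι).linear_image g) hK.isClosed (x := 0) fun ⟨t, ht, hgt⟩ =>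
      h0 t ht (by simpa [g, Fintype.linearCombination_apply] using hgt)
  obtain ⟨i, hi⟩ := h f
  have := hfK (a i) ⟨Pi.single i 1, single_mem_stdSimplex ℝ i,
    by simp [g, Fintype.linearCombination_apply, Pi.single_apply]⟩
  rw [map_zero] at hf0
  linarith

/-- Farkas' lemma. Positivity of `φ` on the generators stands in for the closedness of the cone
they span: the proof separates `0` from the compact convex hull of `-w` and the `v i`. -/
theorem exists_nonneg_sum_smul_eq (v : ι → E) (w : E) (φ : StrongDual ℝ E)
    (hφ : ∀ i, 0 < φ (v i)) (h : ∀ f : StrongDual ℝ E, (∀ i, 0 ≤ f (v i)) → 0 ≤ f w) :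
    ∃ c : ι → ℝ, (∀ i, 0 ≤ c i) ∧ ∑ i, c i • v i = w := by
  obtain ⟨t, ⟨ht0, ht1⟩, hsum⟩ := exists_mem_stdSimplex_sum_smul_eq_zero
    (fun o : Option ι => o.elim (-w) v) fun f => by
      by_contra! hf
      have hw := hf none
      simp only [Option.elim_none, map_neg] at hw
      linarith [h f fun i => (hf (some i)).le]
  simp only [Fintype.sum_option, Option.elim_none, Option.elim_some, smul_neg] at ht1 hsum
  have hnone : t none ≠ 0 := by
    intro h0
    have hφsum : ∑ i, t (some i) * φ (v i) = 0 := by simpa [h0] using congrArg φ hsum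
    have hterms := (Finset.sum_eq_zero_iff_of_nonneg fun i _ =>
      mul_nonneg (ht0 _) (hφ i).le).1 hφsum
    have : ∑ i, t (some i) = 0 := Finset.sum_eq_zero fun i hi => by
      simpa [(hφ i).ne'] using hterms i hi
    linarith
  refine ⟨fun i => t (some i) / t none, fun i => div_nonneg (ht0 _) (ht0 _), ?_⟩
  simp_rw [div_eq_inv_mul, mul_smul, ← Finset.smul_sum]
  rw [← neg_add_eq_zero.mp hsum, ← smul_assoc, smul_eq_mul, inv_mul_cancel₀ hnone, one_smul]

end Farkas

theorem exists_nonneg_sum_mul_eq {ι κ : Type*} (I : Finset ι) (K : Finset κ)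
    (v : ι → κ → ℝ) (w d₀ : κ → ℝ) (hd₀ : ∀ i ∈ I, 0 < ∑ k ∈ K, v i k * d₀ k)
    (h : ∀ d : κ → ℝ, (∀ i ∈ I, 0 ≤ ∑ k ∈ K, v i k * d k) → 0 ≤ ∑ k ∈ K, w k * d k) :
    ∃ c : ι → ℝ, (∀ i ∈ I, 0 ≤ c i) ∧ ∀ k ∈ K, ∑ i ∈ I, c i * v i k = w k := by
  have dual_repr (f : StrongDual ℝ (K → ℝ)) :
      ∃ d : κ → ℝ, ∀ u : κ → ℝ, f (fun k : K => u k) = ∑ k ∈ K, u k * d k := by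
    refine ⟨fun k => if hk : k ∈ K then f fun j => if ⟨k, hk⟩ = j then 1 else 0 else 0,
      fun u => ?_⟩
    rw [← Finset.sum_coe_sort K]
    refine (f.toLinearMap.pi_apply_eq_sum_univ _).trans (Finset.sum_congr rfl fun k _ => ?_)
    simp [k.2]
  obtain ⟨c, hc0, hc⟩ := exists_nonneg_sum_smul_eq (fun i : I => fun k : K => v i k)
    (fun k : K => w k) (∑ k : K, d₀ k • ContinuousLinearMap.proj k)
    (fun i => by simpa [mul_comm, Finset.sum_attach K fun k => v i k * d₀ k] using hd₀ i i.2)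
    fun f hf => by
      obtain ⟨d, hd⟩ := dual_repr f
      rw [hd]
      exact h d fun i hi => (hd _).symm ▸ hf ⟨i, hi⟩
  refine ⟨fun i => if hi : i ∈ I then c ⟨i, hi⟩ else 0, fun i hi => by simp [hi, hc0],
    fun k hk => ?_⟩
  rw [← congrFun hc ⟨k, hk⟩, ← Finset.sum_coe_sort I]
  simp

theorem hasDerivAt_max_zero_rpow {p : ℝ} (hp : 1 < p) (x : ℝ) :
    HasDerivAt (fun y => max y 0 ^ p) (p * max x 0 ^ (p - 1)) x := by
  refine hasDerivAt_of_hasDerivAt_of_ne' (f := fun y : ℝ => max y 0 ^ p)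
    (g := fun y => p * max y 0 ^ (p - 1)) (x := 0) (fun y hy => ?_) ?_ ?_ x
  · rcases hy.lt_or_gt with hy | hy
    · have hzero : (fun y : ℝ => max y 0 ^ p) =ᶠ[𝓝 y] fun _ => 0 :=
        Filter.mem_of_superset (Iio_mem_nhds hy) fun z (hz : z < 0) => by
          simp [max_eq_right hz.le, Real.zero_rpow (by linarith : p ≠ 0)]
      simpa [max_eq_right hy.le, Real.zero_rpow (by linarith : p - 1 ≠ 0)] using
        (hasDerivAt_const y (0 : ℝ)).congr_of_eventuallyEq hzero
    · have hpow : (fun y : ℝ => max y 0 ^ p) =ᶠ[𝓝 y] fun y => y ^ p :=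
        Filter.mem_of_superset (Ioi_mem_nhds hy) fun z (hz : 0 < z) => by
          simp [max_eq_left hz.le]
      simpa [max_eq_left hy.le] using
        (Real.hasDerivAt_rpow_const (Or.inl hy.ne')).congr_of_eventuallyEq hpow
  · exact ((continuous_id.max continuous_const).rpow_const fun _ =>
      Or.inr (by linarith)).continuousAt
  · exact (continuous_const.mul ((continuous_id.max continuous_const).rpow_const fun _ =>
      Or.inr (by linarith))).continuousAt

theorem HasDerivAt.nonneg_of_eventually_le {f : ℝ → ℝ} {f' a : ℝ} (hf : HasDerivAt f f' a)
    (h : ∀ᶠ t in 𝓝[>] a, f a ≤ f t) : 0 ≤ f' := by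
  refine ge_of_tendsto ((hasDerivAt_iff_tendsto_slope.mp hf).mono_left (nhdsGT_le_nhdsNE a)) ?_
  filter_upwards [h, self_mem_nhdsWithin] with t ht hat
  exact (slope_nonneg_iff_of_le (le_of_lt hat)).mpr ht

theorem eqOn_of_sum_rpow_le_sum_midpoint_rpow {ι : Type*} (s : Finset ι) {p : ℝ} (hp : 1 < p)
    {a b : ι → ℝ} (ha : ∀ i ∈ s, 0 ≤ a i) (hb : ∀ i ∈ s, 0 ≤ b i)
    (hab : ∑ i ∈ s, a i ^ p = ∑ i ∈ s, b i ^ p)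
    (hmid : ∑ i ∈ s, a i ^ p ≤ ∑ i ∈ s, ((a i + b i) / 2) ^ p) :
    ∀ i ∈ s, a i = b i := by
  have half (x y : ℝ) : (x + y) / 2 = 1 / 2 * x + 1 / 2 * y := by ring
  have midpoint_le : ∀ i ∈ s, ((a i + b i) / 2) ^ p ≤ (a i ^ p + b i ^ p) / 2 := fun i hi => by
    simpa only [smul_eq_mul, half] using (convexOn_rpow hp.le).2 (ha i hi) (hb i hi)
      (by norm_num : (0 : ℝ) ≤ 1 / 2) (by norm_num : (0 : ℝ) ≤ 1 / 2) (by norm_num)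
  by_contra! hne
  obtain ⟨j, hj, hne⟩ := hne
  have midpoint_lt : ((a j + b j) / 2) ^ p < (a j ^ p + b j ^ p) / 2 := by
    simpa only [smul_eq_mul, half] using (strictConvexOn_rpow hp).2 (ha j hj) (hb j hj) hne
      (by norm_num : (0 : ℝ) < 1 / 2) (by norm_num : (0 : ℝ) < 1 / 2) (by norm_num)
  have := hmid.trans_lt (Finset.sum_lt_sum midpoint_le ⟨j, hj, midpoint_lt⟩)
  rw [← Finset.sum_div, Finset.sum_add_distrib, ← hab] at this
  linarith

theorem ENNReal.ofReal_mul_rpow_sub_one_mul_le {p : ℝ} (hp : 1 < p) (a b : ℝ≥0∞) :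
    ENNReal.ofReal p * b ^ (p - 1) * a ≤ a ^ p + ENNReal.ofReal (p - 1) * b ^ p := by
  have hq : p.HolderConjugate (p / (p - 1)) := Real.HolderConjugate.conjExponent hp
  have hy := ENNReal.young_inequality a (b ^ (p - 1)) hq
  rw [← ENNReal.rpow_mul, mul_div_cancel₀ p (by linarith : p - 1 ≠ 0)] at hy
  calc ENNReal.ofReal p * b ^ (p - 1) * a
      = ENNReal.ofReal p * (a * b ^ (p - 1)) := by ring
    _ ≤ ENNReal.ofReal p * (a ^ p / ENNReal.ofReal p + b ^ p / ENNReal.ofReal (p / (p - 1))) :=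
      mul_le_mul_right hy _
    _ = a ^ p + ENNReal.ofReal (p - 1) * b ^ p := by
      rw [mul_add, ENNReal.mul_div_cancel (ENNReal.ofReal_pos.2 (by linarith)).ne' ENNReal.ofReal_ne_top,
        ← mul_div_assoc, ENNReal.mul_div_right_comm,
        ← ENNReal.ofReal_div_of_pos (div_pos (by linarith) (by linarith)),
        div_div_cancel₀ (by linarith : p ≠ 0)]

namespace CombModFin

variable {X : Type*} {S : Finset (Set X)} {Γ : Set (Set X)} {p : ℝ} {ρ σ τ : Set X → ℝ≥0∞}

/-- The paper's `S(K)`. -/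
noncomputable def trace (S : Finset (Set X)) (K : Set X) : Finset (Set X) :=
  S.filter fun s => (s ∩ K).Nonempty

def Feasible (S : Finset (Set X)) (Γ : Set (Set X)) (τ : Set X → ℝ≥0∞) : Prop :=
  (∀ s ∈ S, τ s ≠ ∞) ∧ ∀ γ ∈ Γ, 1 ≤ len S τ γ

def IsVolMinimizer (S : Finset (Set X)) (Γ : Set (Set X)) (p : ℝ) (ρ : Set X → ℝ≥0∞) : Prop :=
  ∀ τ, Feasible S Γ τ → vol S ρ p ≤ vol S τ p

lemma len_eq_sum_trace (K : Set X) : len S ρ K = ∑ s ∈ trace S K, ρ s := rfl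

lemma mem_trace {s K : Set X} : s ∈ trace S K ↔ s ∈ S ∧ (s ∩ K).Nonempty := Finset.mem_filter

lemma trace_subset (K : Set X) : trace S K ⊆ S := Finset.filter_subset _ _

lemma len_ne_top (h : ∀ s ∈ S, ρ s ≠ ∞) (K : Set X) : len S ρ K ≠ ∞ :=
  ENNReal.sum_ne_top.mpr fun s hs => h s (trace_subset K hs)

lemma vol_ne_top (h : ∀ s ∈ S, ρ s ≠ ∞) (hp : 0 ≤ p) : vol S ρ p ≠ ∞ :=
  ENNReal.sum_ne_top.mpr fun s hs => ENNReal.rpow_ne_top_of_nonneg hp (h s hs)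

lemma vol_ne_zero (h : ∃ s ∈ S, ρ s ≠ 0) (hp : 0 < p) : vol S ρ p ≠ 0 := by
  obtain ⟨s, hs, hρs⟩ := h
  rw [vol, Ne, Finset.sum_eq_zero_iff]
  exact fun hv => hρs ((ENNReal.rpow_eq_zero_iff_of_pos hp).mp (hv s hs))

lemma len_const_mul (c : ℝ≥0∞) (K : Set X) :
    len S (fun s => c * ρ s) K = c * len S ρ K := by
  rw [len, len, Finset.mul_sum]

lemma vol_const_mul (c : ℝ≥0∞) (hp : 0 ≤ p) :
    vol S (fun s => c * ρ s) p = c ^ p * vol S ρ p := by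
  rw [vol, vol, Finset.mul_sum]
  exact Finset.sum_congr rfl fun s _ => ENNReal.mul_rpow_of_nonneg _ _ hp

lemma Lmin_le_len {γ : Set X} (hγ : γ ∈ Γ) : Lmin S ρ Γ ≤ len S ρ γ :=
  iInf₂_le γ hγ

lemma Lmin_ne_top (hΓ : Γ.Nonempty) (h : ∀ s ∈ S, ρ s ≠ ∞) : Lmin S ρ Γ ≠ ∞ :=
  ne_top_of_le_ne_top (len_ne_top h hΓ.some) (Lmin_le_len hΓ.some_mem)

/-- Only finitely many lengths occur, one for each trace. -/
lemma exists_len_eq_Lmin (hΓ : Γ.Nonempty) : ∃ γ ∈ Γ, len S ρ γ = Lmin S ρ Γ := by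
  obtain ⟨_, ⟨γ, hγ, rfl⟩, hmin⟩ := Set.exists_min_image (trace S '' Γ) (fun T => ∑ s ∈ T, ρ s)
    (S.powerset.finite_toSet.subset (by rintro _ ⟨γ, -, rfl⟩; simpa using trace_subset γ))
    (hΓ.image _)
  exact ⟨γ, hγ, le_antisymm (le_iInf₂ fun γ' hγ' => hmin _ ⟨γ', hγ', rfl⟩) (Lmin_le_len hγ)⟩

lemma modWith_of_Lmin_eq_one (hL : Lmin S ρ Γ = 1) : modWith S Γ ρ p = vol S ρ p := by
  rw [modWith, hL, ENNReal.one_rpow, div_one]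

lemma modWith_eq_vol_inv_mul (hp : 0 ≤ p) :
    modWith S Γ σ p = vol S (fun s => (Lmin S σ Γ)⁻¹ * σ s) p := by
  rw [vol_const_mul _ hp, ENNReal.inv_rpow, modWith, div_eq_mul_inv, mul_comm]

lemma feasible_inv_mul (hΓ : Γ.Nonempty) (hσ : ∀ s ∈ S, σ s ≠ ∞) (h0 : Lmin S σ Γ ≠ 0) :
    Feasible S Γ fun s => (Lmin S σ Γ)⁻¹ * σ s := by
  refine ⟨fun s hs => ENNReal.mul_ne_top (ENNReal.inv_ne_top.mpr h0) (hσ s hs), fun γ hγ => ?_⟩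
  rw [len_const_mul, ← ENNReal.inv_mul_cancel h0 (Lmin_ne_top hΓ hσ)]
  exact mul_le_mul_right (Lmin_le_len hγ) _

lemma feasible_of_Lmin_eq_one (hρ : ∀ s ∈ S, ρ s ≠ ∞) (hL : Lmin S ρ Γ = 1) :
    Feasible S Γ ρ :=
  ⟨hρ, fun _ hγ => hL ▸ Lmin_le_len hγ⟩

lemma Feasible.admissible (hΓ : Γ.Nonempty) (hτ : Feasible S Γ τ) : Admissible S τ := by
  obtain ⟨γ, hγ⟩ := hΓ
  obtain ⟨s, hs, hτs⟩ := Finset.exists_ne_zero_of_sum_ne_zero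
    (one_pos.trans_le (hτ.2 γ hγ)).ne'
  exact ⟨hτ.1, s, trace_subset γ hs, hτs⟩

lemma cmod_le_vol (hΓ : Γ.Nonempty) (hp : 0 ≤ p) (hτ : Feasible S Γ τ) :
    cmod S Γ p ≤ vol S τ p := by
  refine (iInf₂_le τ (hτ.admissible hΓ)).trans (ENNReal.div_le_of_le_mul ?_)
  exact le_mul_of_one_le_right' ((ENNReal.one_rpow p).symm.le.trans
    (ENNReal.rpow_le_rpow (le_iInf₂ hτ.2) hp))

lemma modWith_eq_cmod_iff (hp : 0 < p) (hΓ : Γ.Nonempty) (hρ : Admissible S ρ)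
    (hL : Lmin S ρ Γ = 1) : modWith S Γ ρ p = cmod S Γ p ↔ IsVolMinimizer S Γ p ρ := by
  rw [modWith_of_Lmin_eq_one hL]
  refine ⟨fun hopt τ hτ => hopt ▸ cmod_le_vol hΓ hp.le hτ, fun hmin => ?_⟩
  refine le_antisymm (le_iInf₂ fun σ hσ => ?_)
    ((iInf₂_le ρ hρ).trans_eq (modWith_of_Lmin_eq_one hL))
  by_cases h0 : Lmin S σ Γ = 0
  · rw [modWith, h0, ENNReal.zero_rpow_of_pos hp, ENNReal.div_zero (vol_ne_zero hσ.2 hp)]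
    exact le_top
  · rw [modWith_eq_vol_inv_mul hp.le]
    exact hmin _ (feasible_inv_mul hΓ hσ.1 h0)

lemma sum_mul_len_eq (Γ₀ : Finset (Set X)) (lam : Set X → ℝ≥0∞) (τ : Set X → ℝ≥0∞) :
    ∑ γ ∈ Γ₀, lam γ * len S τ γ
      = ∑ s ∈ S, (∑ γ ∈ Γ₀.filter fun γ => (s ∩ γ).Nonempty, lam γ) * τ s := by
  simp only [len, Finset.mul_sum, Finset.sum_mul]
  exact Finset.sum_comm' fun γ s => by simp only [Finset.mem_filter]; tauto

section Multipliers

variable {Γ₀ : Finset (Set X)} {lam : Set X → ℝ≥0∞}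

lemma sum_lam_eq (hp : 1 < p) (hlen : ∀ γ ∈ Γ₀, len S ρ γ = 1)
    (heq : ∀ s ∈ S, ENNReal.ofReal p * ρ s ^ (p - 1)
      = ∑ γ ∈ Γ₀.filter fun γ => (s ∩ γ).Nonempty, lam γ) :
    ∑ γ ∈ Γ₀, lam γ = ENNReal.ofReal p * vol S ρ p := by
  calc ∑ γ ∈ Γ₀, lam γ = ∑ γ ∈ Γ₀, lam γ * len S ρ γ :=
        Finset.sum_congr rfl fun γ hγ => by rw [hlen γ hγ, mul_one]
    _ = ∑ s ∈ S, ENNReal.ofReal p * (ρ s ^ (p - 1) * ρ s) := by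
        rw [sum_mul_len_eq]
        exact Finset.sum_congr rfl fun s hs => by rw [← heq s hs, mul_assoc]
    _ = ENNReal.ofReal p * vol S ρ p := by
        rw [vol, Finset.mul_sum]
        refine Finset.sum_congr rfl fun s _ => ?_
        simpa using congrArg (ENNReal.ofReal p * ·)
          (ENNReal.rpow_add_of_nonneg (x := ρ s) (p - 1) 1 (by linarith) zero_le_one).symm

/-- Testing a feasible `τ` against the multipliers and applying Young's inequality
`p ρ^{p-1} τ ≤ τ^p + (p-1) ρ^p` gives `p V(ρ) ≤ V(τ) + (p-1) V(ρ)`. -/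
lemma isVolMinimizer_of_multipliers (hp : 1 < p) (hρ : ∀ s ∈ S, ρ s ≠ ∞)
    (hΓ₀ : (↑Γ₀ : Set (Set X)) ⊆ Γ) (hlen : ∀ γ ∈ Γ₀, len S ρ γ = 1)
    (heq : ∀ s ∈ S, ENNReal.ofReal p * ρ s ^ (p - 1)
      = ∑ γ ∈ Γ₀.filter fun γ => (s ∩ γ).Nonempty, lam γ) :
    IsVolMinimizer S Γ p ρ := by
  intro τ hτ
  have hsplit : ENNReal.ofReal p = 1 + ENNReal.ofReal (p - 1) := by
    rw [← ENNReal.ofReal_one, ← ENNReal.ofReal_add zero_le_one (by linarith), add_sub_cancel]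
  have key : vol S ρ p + ENNReal.ofReal (p - 1) * vol S ρ p
      ≤ vol S τ p + ENNReal.ofReal (p - 1) * vol S ρ p :=
    calc vol S ρ p + ENNReal.ofReal (p - 1) * vol S ρ p
        = ∑ γ ∈ Γ₀, lam γ := by rw [sum_lam_eq hp hlen heq, hsplit, add_mul, one_mul]
      _ ≤ ∑ γ ∈ Γ₀, lam γ * len S τ γ :=
          Finset.sum_le_sum fun γ hγ => le_mul_of_one_le_right' (hτ.2 γ (hΓ₀ hγ))
      _ = ∑ s ∈ S, ENNReal.ofReal p * ρ s ^ (p - 1) * τ s := by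
          rw [sum_mul_len_eq]
          exact Finset.sum_congr rfl fun s hs => by rw [heq s hs]
      _ ≤ ∑ s ∈ S, (τ s ^ p + ENNReal.ofReal (p - 1) * ρ s ^ p) :=
          Finset.sum_le_sum fun s _ => ENNReal.ofReal_mul_rpow_sub_one_mul_le hp _ _
      _ = vol S τ p + ENNReal.ofReal (p - 1) * vol S ρ p := by
          rw [Finset.sum_add_distrib, vol, vol, Finset.mul_sum]
  exact (ENNReal.add_le_add_iff_right (ENNReal.mul_ne_top ENNReal.ofReal_ne_top
    (vol_ne_top hρ (by linarith)))).mp key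

end Multipliers

lemma vol_eq_ofReal_sum_toReal (hρ : ∀ s ∈ S, ρ s ≠ ∞) (hp : 0 ≤ p) :
    vol S ρ p = ENNReal.ofReal (∑ s ∈ S, (ρ s).toReal ^ p) := by
  rw [vol, ENNReal.ofReal_sum_of_nonneg fun s _ => by positivity]
  refine Finset.sum_congr rfl fun s hs => ?_
  rw [← ENNReal.ofReal_rpow_of_nonneg ENNReal.toReal_nonneg hp, ENNReal.ofReal_toReal (hρ s hs)]

/-- Strict convexity of `x ↦ x^p`: the midpoint of two distinct minimizers would do better. -/
lemma IsVolMinimizer.eqOn_of_vol_le (hmin : IsVolMinimizer S Γ p ρ) (hp : 1 < p)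
    (hρ : Feasible S Γ ρ) (hτ : Feasible S Γ τ) (hvol : vol S τ p ≤ vol S ρ p) :
    ∀ s ∈ S, τ s = ρ s := by
  have hp0 : 0 ≤ p := by linarith
  set σ : Set X → ℝ≥0∞ := fun s => (ρ s + τ s) / 2
  have hσ : Feasible S Γ σ := by
    refine ⟨fun s hs => ENNReal.div_ne_top (ENNReal.add_ne_top.mpr ⟨hρ.1 s hs, hτ.1 s hs⟩)
      two_ne_zero, fun γ hγ => ?_⟩
    have : len S σ γ = (len S ρ γ + len S τ γ) / 2 := by
      simp only [σ, len, ENNReal.div_eq_inv_mul, ← Finset.mul_sum, Finset.sum_add_distrib]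
    rw [this, ENNReal.le_div_iff_mul_le (by simp) (by simp), one_mul, ← one_add_one_eq_two]
    exact add_le_add (hρ.2 γ hγ) (hτ.2 γ hγ)
  have hσ_sum : ∑ s ∈ S, (σ s).toReal ^ p
      = ∑ s ∈ S, (((ρ s).toReal + (τ s).toReal) / 2) ^ p :=
    Finset.sum_congr rfl fun s hs => by
      simp [σ, ENNReal.toReal_div, ENNReal.toReal_add (hρ.1 s hs) (hτ.1 s hs)]
  have hsum := le_antisymm (hmin τ hτ) hvol
  have hmid := hmin σ hσ
  rw [vol_eq_ofReal_sum_toReal hρ.1 hp0, vol_eq_ofReal_sum_toReal hτ.1 hp0] at hsum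
  rw [vol_eq_ofReal_sum_toReal hρ.1 hp0, vol_eq_ofReal_sum_toReal hσ.1 hp0, hσ_sum] at hmid
  intro s hs
  refine ((ENNReal.toReal_eq_toReal_iff' (hρ.1 s hs) (hτ.1 s hs)).mp ?_).symm
  refine eqOn_of_sum_rpow_le_sum_midpoint_rpow S hp (fun _ _ => ENNReal.toReal_nonneg)
    (fun _ _ => ENNReal.toReal_nonneg) ?_ ?_ s hs
  · exact (ENNReal.ofReal_eq_ofReal_iff (by positivity) (by positivity)).mp hsum
  · exact (ENNReal.ofReal_le_ofReal_iff (by positivity)).mp hmid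

lemma exists_eq_const_mul_of_modWith_eq_cmod (hp : 1 < p) (hΓ : Γ.Nonempty)
    (hρ : Admissible S ρ) (hL : Lmin S ρ Γ = 1) (hopt : modWith S Γ ρ p = cmod S Γ p)
    (hσ : Admissible S σ) (hoptσ : modWith S Γ σ p = cmod S Γ p) :
    ∃ c : ℝ≥0∞, 0 < c ∧ c ≠ ∞ ∧ ∀ s ∈ S, σ s = c * ρ s := by
  have hmin := (modWith_eq_cmod_iff (by linarith) hΓ hρ hL).mp hopt
  have hcmod : cmod S Γ p = vol S ρ p := by rw [← hopt, modWith_of_Lmin_eq_one hL]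
  have h0 : Lmin S σ Γ ≠ 0 := by
    intro h0
    rw [modWith, h0, ENNReal.zero_rpow_of_pos (by linarith),
      ENNReal.div_zero (vol_ne_zero hσ.2 (by linarith)), hcmod] at hoptσ
    exact vol_ne_top hρ.1 (by linarith) hoptσ.symm
  have htop := Lmin_ne_top hΓ hσ.1
  have heq := hmin.eqOn_of_vol_le hp (feasible_of_Lmin_eq_one hρ.1 hL)
    (feasible_inv_mul hΓ hσ.1 h0)
    (by rw [← modWith_eq_vol_inv_mul (by linarith), hoptσ, hcmod])
  refine ⟨Lmin S σ Γ, pos_iff_ne_zero.mpr h0, htop, fun s hs => ?_⟩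
  rw [← heq s hs, ← mul_assoc, ENNReal.mul_inv_cancel h0 htop, one_mul]

lemma vol_ofReal (x : Set X → ℝ) (hp : 0 ≤ p) :
    vol S (fun s => ENNReal.ofReal (x s)) p = ENNReal.ofReal (∑ s ∈ S, max (x s) 0 ^ p) := by
  rw [vol, ENNReal.ofReal_sum_of_nonneg fun s _ => by positivity]
  refine Finset.sum_congr rfl fun s _ => ?_
  rw [← ENNReal.ofReal_rpow_of_nonneg (le_max_right _ _) hp]
  simp

/-- Curves of length one stay feasible when `∑_{S(γ)} d ≥ 0`; the longer ones, whose traces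
are finitely many, stay feasible for small `t` by continuity. -/
lemma eventually_feasible_perturb (hρ : Feasible S Γ ρ) (d : Set X → ℝ)
    (hd : ∀ γ ∈ Γ, len S ρ γ = 1 → 0 ≤ ∑ s ∈ trace S γ, d s) :
    ∀ᶠ t in 𝓝[>] (0 : ℝ), Feasible S Γ fun s => ENNReal.ofReal ((ρ s).toReal + t * d s) := by
  have key : ∀ T ∈ S.powerset, ∀ᶠ t in 𝓝[>] (0 : ℝ),
      (∃ γ ∈ Γ, trace S γ = T) → 1 ≤ ∑ s ∈ T, ((ρ s).toReal + t * d s) := by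
    intro T _
    by_cases hT : ∃ γ ∈ Γ, trace S γ = T
    swap
    · exact Eventually.of_forall fun _ h => absurd h hT
    obtain ⟨γ, hγ, rfl⟩ := hT
    have hsum (t : ℝ) : ∑ s ∈ trace S γ, ((ρ s).toReal + t * d s)
        = (len S ρ γ).toReal + t * ∑ s ∈ trace S γ, d s := by
      rw [Finset.sum_add_distrib, ← Finset.mul_sum, len_eq_sum_trace,
        ENNReal.toReal_sum fun s hs => hρ.1 s (trace_subset γ hs)]
    simp only [hsum]
    rcases (hρ.2 γ hγ).eq_or_lt with h1 | h1
    · filter_upwards [self_mem_nhdsWithin] with t (ht : 0 < t) _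
      rw [← h1, ENNReal.toReal_one, le_add_iff_nonneg_right]
      exact mul_nonneg ht.le (hd γ hγ h1.symm)
    · have h1' : 1 < (len S ρ γ).toReal := by
        simpa using ENNReal.toReal_strict_mono (len_ne_top hρ.1 γ) h1
      have hlim : Tendsto (fun t : ℝ => (len S ρ γ).toReal + t * ∑ s ∈ trace S γ, d s)
          (𝓝[>] 0) (𝓝 (len S ρ γ).toReal) :=
        tendsto_nhdsWithin_of_tendsto_nhds (by
          simpa using (continuous_const.add (continuous_id.mul continuous_const)).tendsto
            (f := fun t : ℝ => (len S ρ γ).toReal + t * ∑ s ∈ trace S γ, d s) 0)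
      filter_upwards [hlim.eventually_const_lt h1'] with t ht _ using ht.le
  filter_upwards [(Finset.eventually_all S.powerset).2 key] with t ht
  refine ⟨fun _ _ => ENNReal.ofReal_ne_top, fun γ hγ => ?_⟩
  calc (1 : ℝ≥0∞) = ENNReal.ofReal 1 := ENNReal.ofReal_one.symm
    _ ≤ ENNReal.ofReal (∑ s ∈ trace S γ, ((ρ s).toReal + t * d s)) :=
      ENNReal.ofReal_le_ofReal (ht _ (Finset.mem_powerset.2 (trace_subset γ)) ⟨γ, hγ, rfl⟩)
    _ ≤ len S _ γ := Finset.le_sum_of_subadditive ENNReal.ofReal ENNReal.ofReal_zero.le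
      (fun _ _ => ENNReal.ofReal_add_le) _ _

/-- First variation of the volume at a minimizer. `ENNReal.ofReal` clips the perturbed metric at
`0`, so `d` may be negative where `ρ` vanishes; the clipped volume stays differentiable as
`p > 1`. -/
lemma IsVolMinimizer.sum_mul_nonneg (hmin : IsVolMinimizer S Γ p ρ) (hp : 1 < p)
    (hρ : Feasible S Γ ρ) (d : Set X → ℝ)
    (hd : ∀ γ ∈ Γ, len S ρ γ = 1 → 0 ≤ ∑ s ∈ trace S γ, d s) :
    0 ≤ ∑ s ∈ S, p * (ρ s).toReal ^ (p - 1) * d s := by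
  have hp0 : 0 ≤ p := by linarith
  let F (t : ℝ) : ℝ := ∑ s ∈ S, max ((ρ s).toReal + t * d s) 0 ^ p
  have hF : HasDerivAt F (∑ s ∈ S, p * (ρ s).toReal ^ (p - 1) * d s) 0 := by
    refine HasDerivAt.fun_sum fun s _ => ?_
    simpa [Function.comp_def, max_eq_left ENNReal.toReal_nonneg] using
      (hasDerivAt_max_zero_rpow hp _).comp 0
        (((hasDerivAt_id 0).mul_const (d s)).const_add (ρ s).toReal)
  have hF0 : vol S ρ p = ENNReal.ofReal (F 0) := by
    rw [← vol_ofReal _ hp0]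
    exact Finset.sum_congr rfl fun s hs => by simp [ENNReal.ofReal_toReal (hρ.1 s hs)]
  refine hF.nonneg_of_eventually_le ?_
  filter_upwards [eventually_feasible_perturb hρ d hd] with t ht
  have := hmin _ ht
  rw [hF0, vol_ofReal _ hp0] at this
  exact (ENNReal.ofReal_le_ofReal_iff (by positivity)).mp this

noncomputable def activeTraces (S : Finset (Set X)) (Γ : Set (Set X)) (ρ : Set X → ℝ≥0∞) :
    Finset (Finset (Set X)) :=
  S.powerset.filter fun T => (∃ γ ∈ Γ, trace S γ = T) ∧ ∑ s ∈ T, ρ s = 1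

lemma mem_activeTraces {T : Finset (Set X)} :
    T ∈ activeTraces S Γ ρ ↔ T ⊆ S ∧ (∃ γ ∈ Γ, trace S γ = T) ∧ ∑ s ∈ T, ρ s = 1 := by
  simp [activeTraces]

lemma trace_mem_activeTraces {γ : Set X} (hγ : γ ∈ Γ) (h1 : len S ρ γ = 1) :
    trace S γ ∈ activeTraces S Γ ρ :=
  mem_activeTraces.2 ⟨trace_subset γ, ⟨γ, hγ, rfl⟩, h1⟩

/-- By Farkas' lemma the first-variation inequality puts the gradient `p ρ^{p-1}` in the cone
spanned by the indicators of the active traces; the direction `d = 1` is positive on all of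
them. -/
lemma IsVolMinimizer.exists_trace_multipliers (hmin : IsVolMinimizer S Γ p ρ) (hp : 1 < p)
    (hρ : Feasible S Γ ρ) :
    ∃ c : Finset (Set X) → ℝ, (∀ T ∈ activeTraces S Γ ρ, 0 ≤ c T) ∧
      ∀ s ∈ S, ∑ T ∈ (activeTraces S Γ ρ).filter (s ∈ ·), c T = p * (ρ s).toReal ^ (p - 1) := by
  have sum_indicator_mul {T : Finset (Set X)} (hT : T ⊆ S) (d : Set X → ℝ) :
      ∑ s ∈ S, (if s ∈ T then 1 else 0) * d s = ∑ s ∈ T, d s := by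
    simp only [ite_mul, one_mul, zero_mul]
    rw [Finset.sum_ite_mem, Finset.inter_eq_right.2 hT]
  obtain ⟨c, hc0, hc⟩ := exists_nonneg_sum_mul_eq (activeTraces S Γ ρ) S
    (fun T s => if s ∈ T then 1 else 0) (fun s => p * (ρ s).toReal ^ (p - 1)) 1
    (fun T hT => by
      obtain ⟨hTS, -, hT1⟩ := mem_activeTraces.1 hT
      obtain ⟨s, hs, -⟩ := Finset.exists_ne_zero_of_sum_ne_zero (hT1 ▸ one_ne_zero)
      rw [sum_indicator_mul hTS]
      simpa using ⟨s, hs⟩)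
    (fun d hd => hmin.sum_mul_nonneg hp hρ d fun γ hγ h1 => by
      simpa only [sum_indicator_mul (trace_subset γ)] using
        hd _ (trace_mem_activeTraces hγ h1))
  refine ⟨c, hc0, fun s hs => ?_⟩
  rw [Finset.sum_filter, ← hc s hs]
  simp only [mul_ite, mul_one, mul_zero]

lemma exists_multipliers_of_isVolMinimizer (hp : 1 < p) (hΓ : Γ.Nonempty)
    (hρ : ∀ s ∈ S, ρ s ≠ ∞) (hL : Lmin S ρ Γ = 1) (hmin : IsVolMinimizer S Γ p ρ) :
    ∃ Γ₀ : Finset (Set X), (↑Γ₀ : Set (Set X)) ⊆ Γ ∧ Γ₀.Nonempty ∧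
      ∃ lam : Set X → ℝ≥0∞, (∀ γ ∈ Γ₀, lam γ ≠ ∞) ∧ (∀ γ ∈ Γ₀, len S ρ γ = 1) ∧
        ∀ s ∈ S, ENNReal.ofReal p * ρ s ^ (p - 1)
          = ∑ γ ∈ Γ₀.filter fun γ => (s ∩ γ).Nonempty, lam γ := by
  set A := activeTraces S Γ ρ
  obtain ⟨c, hc0, hc⟩ := hmin.exists_trace_multipliers hp (feasible_of_Lmin_eq_one hρ hL)
  choose! γ_ hγ_Γ hγ_trace using fun T (hT : T ∈ A) => (mem_activeTraces.1 hT).2.1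
  have hinj : Set.InjOn γ_ A := fun T hT T' hT' h => by
    rw [← hγ_trace T hT, ← hγ_trace T' hT', h]
  obtain ⟨γ₁, hγ₁, h₁⟩ := exists_len_eq_Lmin (ρ := ρ) hΓ
  refine ⟨A.image γ_, ?_, Finset.image_nonempty.2 ⟨_, trace_mem_activeTraces hγ₁ (h₁.trans hL)⟩,
    fun γ => ENNReal.ofReal (c (trace S γ)), fun _ _ => ENNReal.ofReal_ne_top, ?_,
    fun s hs => ?_⟩
  · intro γ hγ
    obtain ⟨T, hT, rfl⟩ := Finset.mem_image.1 hγ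
    exact hγ_Γ T hT
  · intro γ hγ
    obtain ⟨T, hT, rfl⟩ := Finset.mem_image.1 hγ
    rw [len_eq_sum_trace, hγ_trace T hT]
    exact (mem_activeTraces.1 hT).2.2
  · have hmeets : ∀ T ∈ A, (s ∩ γ_ T).Nonempty ↔ s ∈ T := fun T hT => by
      have h := mem_trace (S := S) (s := s) (K := γ_ T)
      rw [hγ_trace T hT] at h
      exact (h.trans (and_iff_right hs)).symm
    rw [Finset.filter_image, Finset.sum_image (hinj.mono (Finset.filter_subset _ _)),
      Finset.filter_congr hmeets,
      Finset.sum_congr rfl fun T hT => by rw [hγ_trace T (Finset.mem_filter.1 hT).1],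
      ← ENNReal.ofReal_sum_of_nonneg fun T hT => hc0 T (Finset.mem_filter.1 hT).1, hc s hs,
      ENNReal.ofReal_mul (by linarith),
      ← ENNReal.ofReal_rpow_of_nonneg ENNReal.toReal_nonneg (by linarith),
      ENNReal.ofReal_toReal (hρ s hs)]

end CombModFin

open CombModFin

theorem stmt3_general {X : Type*} (S : Finset (Set X))
    (Γ : Set (Set X)) (hΓne : Γ.Nonempty)
    (p : ℝ) (hp : 1 < p)
    (ρ : Set X → ℝ≥0∞) (hρ : Admissible S ρ) (hL : Lmin S ρ Γ = 1) :
    (modWith S Γ ρ p = cmod S Γ p ↔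
      ∃ Γ₀ : Finset (Set X), (↑Γ₀ : Set (Set X)) ⊆ Γ ∧ Γ₀.Nonempty ∧
        ∃ lam : Set X → ℝ≥0∞, (∀ γ ∈ Γ₀, lam γ ≠ ∞) ∧
          (∀ γ ∈ Γ₀, len S ρ γ = 1) ∧
          (∀ s ∈ S, ENNReal.ofReal p * ρ s ^ (p - 1)
              = ∑ γ ∈ Γ₀.filter fun γ => (s ∩ γ).Nonempty, lam γ)) ∧
    (∀ Γ₀ : Finset (Set X), (↑Γ₀ : Set (Set X)) ⊆ Γ → Γ₀.Nonempty →
      ∀ lam : Set X → ℝ≥0∞, (∀ γ ∈ Γ₀, lam γ ≠ ∞) →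
        (∀ γ ∈ Γ₀, len S ρ γ = 1) →
        (∀ s ∈ S, ENNReal.ofReal p * ρ s ^ (p - 1)
            = ∑ γ ∈ Γ₀.filter fun γ => (s ∩ γ).Nonempty, lam γ) →
        cmod S Γ p = (ENNReal.ofReal p)⁻¹ * ∑ γ ∈ Γ₀, lam γ) ∧
    (∀ ρ' : Set X → ℝ≥0∞, Admissible S ρ' →
      modWith S Γ ρ p = cmod S Γ p → modWith S Γ ρ' p = cmod S Γ p →
      ∃ c : ℝ≥0∞, 0 < c ∧ c ≠ ∞ ∧ ∀ s ∈ S, ρ' s = c * ρ s) := by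
  have hopt_iff := modWith_eq_cmod_iff (by linarith) hΓne hρ hL
  have hp0 : ENNReal.ofReal p ≠ 0 := (ENNReal.ofReal_pos.2 (by linarith)).ne'
  refine ⟨hopt_iff.trans ⟨exists_multipliers_of_isVolMinimizer hp hΓne hρ.1 hL,
      fun ⟨Γ₀, hΓ₀, _, lam, _, hlen, heq⟩ =>
        isVolMinimizer_of_multipliers hp hρ.1 hΓ₀ hlen heq⟩,
    fun Γ₀ hΓ₀ _ lam _ hlen heq => ?_,
    fun _ hρ' hopt hopt' => exists_eq_const_mul_of_modWith_eq_cmod hp hΓne hρ hL hopt hρ' hopt'⟩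
  rw [← hopt_iff.2 (isVolMinimizer_of_multipliers hp hρ.1 hΓ₀ hlen heq),
    modWith_of_Lmin_eq_one hL, sum_lam_eq hp hlen heq, ← mul_assoc,
    ENNReal.inv_mul_cancel hp0 ENNReal.ofReal_ne_top, one_mul]

/-- Combinatorial Beurling criterion: a normalized admissible metric `ρ` (with
`L_ρ(Γ,S) = 1`) is optimal iff there are a nonempty finite subfamily `Γ₀ ⊆ Γ` and
nonnegative scalars `λ_γ` with `ℓ_ρ(γ) = 1` for all `γ ∈ Γ₀` and
`p·ρ(s)^{p-1} = Σ_{γ∈Γ₀, s∩γ≠∅} λ_γ` for all `s ∈ S`; in this case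
`mod_p(Γ,S) = (1/p)·Σ_{γ∈Γ₀} λ_γ`, and the optimal metric is unique up to a positive
scalar multiple. -/
theorem stmt3 {X : Type*} (S : Finset (Set X)) (hcover : ∀ x : X, ∃ s ∈ S, x ∈ s)
    (Γ : Set (Set X)) (hΓ : ∀ γ ∈ Γ, γ.Nonempty) (hΓne : Γ.Nonempty)
    (p : ℝ) (hp : 1 < p)
    (ρ : Set X → ℝ≥0∞) (hρ : Admissible S ρ) (hL : Lmin S ρ Γ = 1) :
    (modWith S Γ ρ p = cmod S Γ p ↔
      ∃ Γ₀ : Finset (Set X), (↑Γ₀ : Set (Set X)) ⊆ Γ ∧ Γ₀.Nonempty ∧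
        ∃ lam : Set X → ℝ≥0∞, (∀ γ ∈ Γ₀, lam γ ≠ ∞) ∧
          (∀ γ ∈ Γ₀, len S ρ γ = 1) ∧
          (∀ s ∈ S, ENNReal.ofReal p * ρ s ^ (p - 1)
              = ∑ γ ∈ Γ₀.filter fun γ => (s ∩ γ).Nonempty, lam γ)) ∧
    (∀ Γ₀ : Finset (Set X), (↑Γ₀ : Set (Set X)) ⊆ Γ → Γ₀.Nonempty →
      ∀ lam : Set X → ℝ≥0∞, (∀ γ ∈ Γ₀, lam γ ≠ ∞) →
        (∀ γ ∈ Γ₀, len S ρ γ = 1) →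
        (∀ s ∈ S, ENNReal.ofReal p * ρ s ^ (p - 1)
            = ∑ γ ∈ Γ₀.filter fun γ => (s ∩ γ).Nonempty, lam γ) →
        cmod S Γ p = (ENNReal.ofReal p)⁻¹ * ∑ γ ∈ Γ₀, lam γ) ∧
    (∀ ρ' : Set X → ℝ≥0∞, Admissible S ρ' →
      modWith S Γ ρ p = cmod S Γ p → modWith S Γ ρ' p = cmod S Γ p →
      ∃ c : ℝ≥0∞, 0 < c ∧ c ≠ ∞ ∧ ∀ s ∈ S, ρ' s = c * ρ s) :=
  stmt3_general S Γ hΓne p hp ρ hρ hL
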